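/- Let N ≥ 5 and W_{(λ)}, W_{[λ]}(x) = λ^{−N/2}W(x/λ). Setting ΛW = x·∇W + ((N−2)/2)W, there is C = C(N) such that for 0 < λ < μ: ∫_{ℝ^N} |(ΛW)_{[λ]}(ΛW)_{[μ]}| dx ≤ C(λ/μ)^{N/2−2}. -/

import Mathlib

open MeasureTheory Real

/-- The Aubin–Talenti ground state `W`. -/
noncomputable def W (N : ℕ) (x : EuclideanSpace ℝ (Fin N)) : ℝ :=
  (1 + ‖x‖ ^ 2 / ((N : ℝ) * ((N : ℝ) - 2))) ^ (((2 : ℝ) - (N : ℝ)) / 2)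

/-- `ΛW = x · ∇W + ((N-2)/2) W`, the generator of the scaling symmetry. -/
noncomputable def LamW (N : ℕ) (x : EuclideanSpace ℝ (Fin N)) : ℝ :=
  (inner ℝ x (gradient (W N) x) : ℝ) + (((N : ℝ) - 2) / 2) * W N x

/-- The `L²`-invariant rescaling `(ΛW)_{[λ]}(x) = λ^{-N/2} ΛW(x/λ)`. -/
noncomputable def LamWb (N : ℕ) (lam : ℝ) (x : EuclideanSpace ℝ (Fin N)) : ℝ :=
  lam ^ (-(N : ℝ) / 2) * LamW N (lam⁻¹ • x)

/-!
`W` is radial with `ΛW = ((N-2)/2)(1 - s)(1 + s)^{-N/2}`, `s = |x|²/(N(N-2))`, so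
`|ΛW| ≤ ((N-2)/2) W` with `W ≤ 1` and `W ≲ |x|^{2-N}`. Bounding the concentrated factor
`(ΛW)_{[λ]}` by `λ^{N/2-2} |x|^{2-N}` and the spread-out one by `μ^{-N/2} W(x/μ)`, the substitution
`x = μ y` leaves `(λ/μ)^{N/2-2} ∫ |y|^{2-N} W(y) dy`, which is finite: the integrand is
`O(|y|^{2-N})` at the origin and `O(|y|^{4-2N})` at infinity, and `2N - 4 > N` exactly when `N ≥ 5`.
-/

open Set Metric

section W

variable {N : ℕ}

lemma one_add_norm_sq_div_pos (hN : 2 < N) (x : EuclideanSpace ℝ (Fin N)) :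
    0 < 1 + ‖x‖ ^ 2 / ((N : ℝ) * ((N : ℝ) - 2)) := by
  have : (2 : ℝ) < N := by exact_mod_cast hN
  have : 0 < (N : ℝ) * ((N : ℝ) - 2) := by nlinarith
  positivity

lemma LamW_eq (hN : 2 < N) (x : EuclideanSpace ℝ (Fin N)) :
    LamW N x = ((N : ℝ) - 2) / 2 * (1 - ‖x‖ ^ 2 / ((N : ℝ) * ((N : ℝ) - 2))) *
      (1 + ‖x‖ ^ 2 / ((N : ℝ) * ((N : ℝ) - 2))) ^ ((2 - (N : ℝ)) / 2 - 1) := by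
  set c : ℝ := (N : ℝ) * ((N : ℝ) - 2)
  set u : ℝ := 1 + ‖x‖ ^ 2 / c
  have hu : 0 < u := one_add_norm_sq_div_pos hN x
  have hW : HasFDerivAt (W N) _ x :=
    (((hasStrictFDerivAt_norm_sq x).hasFDerivAt.mul_const c⁻¹).const_add 1).rpow_const
      (p := (2 - (N : ℝ)) / 2) (Or.inl (by rw [← div_eq_mul_inv]; exact hu.ne'))
  have hWx : W N x = u ^ ((2 - (N : ℝ)) / 2 - 1) * u := by
    rw [← Real.rpow_add_one hu.ne', sub_add_cancel, W]
  rw [LamW, inner_gradient_right, conj_trivial, hW.fderiv, hWx]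
  simp only [smul_apply, innerSL_apply_apply, real_inner_self_eq_norm_sq,
    smul_eq_mul, nsmul_eq_mul, u, div_eq_mul_inv]
  ring

lemma W_nonneg (hN : 2 < N) (x : EuclideanSpace ℝ (Fin N)) : 0 ≤ W N x :=
  Real.rpow_nonneg (one_add_norm_sq_div_pos hN x).le _

lemma W_le_one (hN : 2 < N) (x : EuclideanSpace ℝ (Fin N)) : W N x ≤ 1 := by
  have : (2 : ℝ) < N := by exact_mod_cast hN
  have : 0 < (N : ℝ) * ((N : ℝ) - 2) := by nlinarith
  exact Real.rpow_le_one_of_one_le_of_nonpos (le_add_of_nonneg_right (by positivity)) (by linarith)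

lemma abs_LamW_le (hN : 2 < N) (x : EuclideanSpace ℝ (Fin N)) :
    |LamW N x| ≤ ((N : ℝ) - 2) / 2 * W N x := by
  have h2 : (2 : ℝ) < N := by exact_mod_cast hN
  have hc : 0 < (N : ℝ) * ((N : ℝ) - 2) := by nlinarith
  set s := ‖x‖ ^ 2 / ((N : ℝ) * ((N : ℝ) - 2))
  have hs : 0 ≤ s := by positivity
  have hu : 0 < 1 + s := by positivity
  calc |LamW N x| = ((N : ℝ) - 2) / 2 * |1 - s| * (1 + s) ^ ((2 - (N : ℝ)) / 2 - 1) := by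
        rw [LamW_eq hN, abs_mul, abs_mul, abs_of_pos (by linarith : (0 : ℝ) < ((N : ℝ) - 2) / 2),
          abs_of_pos (Real.rpow_pos_of_pos hu _)]
    _ ≤ ((N : ℝ) - 2) / 2 * (1 + s) * (1 + s) ^ ((2 - (N : ℝ)) / 2 - 1) := by
        gcongr
        exact abs_sub_le_iff.2 ⟨by linarith, by linarith⟩
    _ = ((N : ℝ) - 2) / 2 * W N x := by
        rw [mul_assoc, mul_comm (1 + s), ← Real.rpow_add_one hu.ne', sub_add_cancel, W]

lemma W_le_norm_rpow (hN : 2 < N) {x : EuclideanSpace ℝ (Fin N)} (hx : x ≠ 0) :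
    W N x ≤ ((N : ℝ) * ((N : ℝ) - 2)) ^ (((N : ℝ) - 2) / 2) * ‖x‖ ^ (2 - (N : ℝ)) := by
  have h2 : (2 : ℝ) < N := by exact_mod_cast hN
  set c := (N : ℝ) * ((N : ℝ) - 2)
  have hc : 0 < c := by nlinarith
  have hx : 0 < ‖x‖ := norm_pos_iff.2 hx
  calc W N x ≤ (‖x‖ ^ 2 / c) ^ ((2 - (N : ℝ)) / 2) :=
        Real.rpow_le_rpow_of_nonpos (by positivity) (by linarith) (by linarith)
    _ = c ^ (((N : ℝ) - 2) / 2) * ‖x‖ ^ (2 - (N : ℝ)) := by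
        rw [Real.div_rpow (by positivity) hc.le, ← Real.rpow_natCast, ← Real.rpow_mul hx.le,
          div_eq_mul_inv, ← Real.rpow_neg hc.le]
        ring_nf

end W

lemma rpow_neg_le_two_rpow_mul_one_add_rpow_neg {r β : ℝ} (hr : 1 ≤ r) (hβ : 0 ≤ β) :
    r ^ (-β) ≤ 2 ^ β * (1 + r) ^ (-β) := by
  have h2r : (2 * r) ^ (-β) ≤ (1 + r) ^ (-β) :=
    Real.rpow_le_rpow_of_nonpos (by positivity) (by linarith) (by linarith)
  rw [Real.mul_rpow zero_le_two (by linarith)] at h2r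
  calc r ^ (-β) = 2 ^ β * (2 ^ (-β) * r ^ (-β)) := by
        rw [← mul_assoc, ← Real.rpow_add two_pos, add_neg_cancel, Real.rpow_zero, one_mul]
    _ ≤ 2 ^ β * (1 + r) ^ (-β) := by gcongr

section Integrability

variable {E F : Type*} [NormedAddCommGroup E] [NormedSpace ℝ E] [FiniteDimensional ℝ E]
  [MeasurableSpace E] [BorelSpace E] [NormedAddCommGroup F] {μ : Measure E} [μ.IsAddHaarMeasure]

lemma integrable_of_norm_le_rpow_of_norm_le_rpow (hd : 1 ≤ Module.finrank ℝ E) {f : E → F}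
    {C₀ C₁ α β : ℝ} (hα : α < Module.finrank ℝ E) (hβ : Module.finrank ℝ E < β)
    (h_zero : ∀ x, ‖f x‖ ≤ C₀ * ‖x‖ ^ (-α)) (h_infty : ∀ x, ‖f x‖ ≤ C₁ * ‖x‖ ^ (-β))
    (hf : AEStronglyMeasurable f μ) : Integrable f μ := by
  have hβ0 : 0 ≤ β := (Nat.cast_nonneg _).trans hβ.le
  rw [← integrableOn_univ, ← union_compl_self (ball (0 : E) 1)]
  refine (integrableOn_ball_of_norm_le_rpow hd hα (ae_of_all _ h_zero) hf).union ?_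
  refine (((integrable_one_add_norm hβ).const_mul (C₁ * 2 ^ β)).integrableOn).mono' hf.restrict
    ((ae_restrict_iff' measurableSet_ball.compl).2 (ae_of_all _ fun x hx => ?_))
  have hx : 1 ≤ ‖x‖ := by simpa using hx
  have hC : 0 ≤ C₁ := nonneg_of_mul_nonneg_left ((norm_nonneg _).trans (h_infty x))
    (Real.rpow_pos_of_pos (by linarith) _)
  calc ‖f x‖ ≤ C₁ * ‖x‖ ^ (-β) := h_infty x
    _ ≤ C₁ * (2 ^ β * (1 + ‖x‖) ^ (-β)) := by
        gcongr; exact rpow_neg_le_two_rpow_mul_one_add_rpow_neg hx hβ0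
    _ = C₁ * 2 ^ β * (1 + ‖x‖) ^ (-β) := by ring

lemma integral_inv_pow_finrank_mul_comp_inv_smul (f : E → ℝ) {R : ℝ} (hR : 0 < R) :
    ∫ x, (R ^ Module.finrank ℝ E)⁻¹ * f (R⁻¹ • x) ∂μ = ∫ x, f x ∂μ := by
  rw [integral_const_mul, Measure.integral_comp_inv_smul_of_nonneg μ f hR.le, smul_eq_mul,
    inv_mul_cancel_left₀ (pow_ne_zero _ hR.ne')]

end Integrability

lemma norm_inv_smul_rpow {E : Type*} [NormedAddCommGroup E] [NormedSpace ℝ E] {a : ℝ}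
    (ha : 0 < a) (x : E) (s : ℝ) : ‖a⁻¹ • x‖ ^ s = (a ^ s)⁻¹ * ‖x‖ ^ s := by
  rw [norm_smul, Real.norm_of_nonneg (inv_nonneg.2 ha.le),
    Real.mul_rpow (inv_nonneg.2 ha.le) (norm_nonneg x), Real.inv_rpow ha.le]

section Rescaling

variable {N : ℕ}

noncomputable def normRpowMulW (N : ℕ) (y : EuclideanSpace ℝ (Fin N)) : ℝ :=
  ‖y‖ ^ (2 - (N : ℝ)) * W N y

lemma integrable_normRpowMulW (hN : 5 ≤ N) : Integrable (normRpowMulW N) := by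
  have h5 : (5 : ℝ) ≤ N := by exact_mod_cast hN
  have hN2 : 2 < N := by omega
  have hd : Module.finrank ℝ (EuclideanSpace ℝ (Fin N)) = N := finrank_euclideanSpace_fin
  have hψ (y : EuclideanSpace ℝ (Fin N)) : ‖normRpowMulW N y‖ = normRpowMulW N y :=
    Real.norm_of_nonneg (mul_nonneg (Real.rpow_nonneg (norm_nonneg y) _) (W_nonneg hN2 y))
  refine integrable_of_norm_le_rpow_of_norm_le_rpow (C₀ := 1) (α := (N : ℝ) - 2)
    (C₁ := ((N : ℝ) * ((N : ℝ) - 2)) ^ (((N : ℝ) - 2) / 2)) (β := 2 * (N : ℝ) - 4)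
    (by omega) (by rw [hd]; linarith) (by rw [hd]; linarith) (fun y => ?_) (fun y => ?_)
    (by unfold normRpowMulW W; fun_prop)
  · rw [hψ, one_mul, neg_sub]
    exact mul_le_of_le_one_right (Real.rpow_nonneg (norm_nonneg y) _) (W_le_one hN2 y)
  · rw [hψ]
    rcases eq_or_ne y 0 with rfl | hy
    · rw [normRpowMulW, norm_zero, Real.zero_rpow (by linarith), zero_mul]
      exact mul_nonneg (Real.rpow_nonneg (by nlinarith) _) (Real.rpow_nonneg le_rfl _)
    calc normRpowMulW N y ≤ ‖y‖ ^ (2 - (N : ℝ)) *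
          (((N : ℝ) * ((N : ℝ) - 2)) ^ (((N : ℝ) - 2) / 2) * ‖y‖ ^ (2 - (N : ℝ))) :=
          mul_le_mul_of_nonneg_left (W_le_norm_rpow hN2 hy) (Real.rpow_nonneg (norm_nonneg y) _)
      _ = ((N : ℝ) * ((N : ℝ) - 2)) ^ (((N : ℝ) - 2) / 2) * ‖y‖ ^ (-(2 * (N : ℝ) - 4)) := by
          rw [mul_left_comm, ← Real.rpow_add (norm_pos_iff.2 hy)]
          ring_nf

lemma abs_LamWb_le (hN : 2 < N) {lam : ℝ} (hlam : 0 < lam) (x : EuclideanSpace ℝ (Fin N)) :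
    |LamWb N lam x| ≤ ((N : ℝ) - 2) / 2 * (lam ^ (-(N : ℝ) / 2) * W N (lam⁻¹ • x)) := by
  rw [LamWb, abs_mul, abs_of_pos (Real.rpow_pos_of_pos hlam _), mul_left_comm]
  exact mul_le_mul_of_nonneg_left (abs_LamW_le hN _) (Real.rpow_nonneg hlam.le _)

lemma rpow_mul_W_inv_smul_le (hN : 2 < N) {lam : ℝ} (hlam : 0 < lam)
    {x : EuclideanSpace ℝ (Fin N)} (hx : x ≠ 0) :
    lam ^ (-(N : ℝ) / 2) * W N (lam⁻¹ • x) ≤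
      ((N : ℝ) * ((N : ℝ) - 2)) ^ (((N : ℝ) - 2) / 2) * lam ^ ((N : ℝ) / 2 - 2) *
        ‖x‖ ^ (2 - (N : ℝ)) := by
  calc lam ^ (-(N : ℝ) / 2) * W N (lam⁻¹ • x) ≤ lam ^ (-(N : ℝ) / 2) *
        (((N : ℝ) * ((N : ℝ) - 2)) ^ (((N : ℝ) - 2) / 2) * ‖lam⁻¹ • x‖ ^ (2 - (N : ℝ))) :=
        mul_le_mul_of_nonneg_left (W_le_norm_rpow hN (smul_ne_zero (inv_ne_zero hlam.ne') hx))
          (Real.rpow_nonneg hlam.le _)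
    _ = _ := by
        have hpow : lam ^ (-(N : ℝ) / 2) * lam ^ (-(2 - (N : ℝ))) = lam ^ ((N : ℝ) / 2 - 2) := by
          rw [← Real.rpow_add hlam]; ring_nf
        rw [norm_inv_smul_rpow hlam, ← Real.rpow_neg hlam.le, ← hpow]
        ring

lemma abs_LamWb_mul_LamWb_le (hN : 2 < N) {lam mu : ℝ} (hlam : 0 < lam) (hmu : 0 < mu)
    {x : EuclideanSpace ℝ (Fin N)} (hx : x ≠ 0) :
    |LamWb N lam x * LamWb N mu x| ≤
      (((N : ℝ) - 2) / 2) ^ 2 * ((N : ℝ) * ((N : ℝ) - 2)) ^ (((N : ℝ) - 2) / 2) *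
        (lam / mu) ^ ((N : ℝ) / 2 - 2) * ((mu ^ N)⁻¹ * normRpowMulW N (mu⁻¹ • x)) := by
  have h2 : (2 : ℝ) < N := by exact_mod_cast hN
  have hpow : mu ^ (-(N : ℝ) / 2) =
      (mu ^ ((N : ℝ) / 2 - 2))⁻¹ * (mu ^ N)⁻¹ * (mu ^ (2 - (N : ℝ)))⁻¹ := by
    rw [← Real.rpow_natCast, ← Real.rpow_neg hmu.le, ← Real.rpow_neg hmu.le,
      ← Real.rpow_neg hmu.le, ← Real.rpow_add hmu, ← Real.rpow_add hmu]
    ring_nf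
  calc |LamWb N lam x * LamWb N mu x| = |LamWb N lam x| * |LamWb N mu x| := abs_mul _ _
    _ ≤ (((N : ℝ) - 2) / 2 * (((N : ℝ) * ((N : ℝ) - 2)) ^ (((N : ℝ) - 2) / 2) *
          lam ^ ((N : ℝ) / 2 - 2) * ‖x‖ ^ (2 - (N : ℝ)))) *
        (((N : ℝ) - 2) / 2 * (mu ^ (-(N : ℝ) / 2) * W N (mu⁻¹ • x))) := by
        refine mul_le_mul ((abs_LamWb_le hN hlam x).trans ?_) (abs_LamWb_le hN hmu x)
          (abs_nonneg _) (by have := W_nonneg hN (mu⁻¹ • x); positivity)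
        exact mul_le_mul_of_nonneg_left (rpow_mul_W_inv_smul_le hN hlam hx) (by linarith)
    _ = _ := by
        rw [normRpowMulW, norm_inv_smul_rpow hmu, Real.div_rpow hlam.le hmu.le, hpow]
        ring

end Rescaling

theorem LamW_product_estimate (N : ℕ) (hN : 5 ≤ N) :
    ∃ C > 0, ∀ lam mu : ℝ, 0 < lam → lam < mu →
      (∫ x : EuclideanSpace ℝ (Fin N), |LamWb N lam x * LamWb N mu x|)
        ≤ C * (lam / mu) ^ ((N : ℝ) / 2 - 2) := by
  have hN2 : 2 < N := by omega
  have : NeZero N := ⟨by omega⟩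
  set B := (((N : ℝ) - 2) / 2) ^ 2 * ((N : ℝ) * ((N : ℝ) - 2)) ^ (((N : ℝ) - 2) / 2)
  refine ⟨max (B * ∫ y, normRpowMulW N y) 1, lt_max_of_lt_right one_pos,
    fun lam mu hlam hlt => ?_⟩
  have hmu := hlam.trans hlt
  have h_scaled : ∫ x, (mu ^ N)⁻¹ * normRpowMulW N (mu⁻¹ • x) = ∫ y, normRpowMulW N y := by
    simpa using integral_inv_pow_finrank_mul_comp_inv_smul (μ := volume) (normRpowMulW N) hmu
  calc (∫ x, |LamWb N lam x * LamWb N mu x|)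
      ≤ ∫ x, B * (lam / mu) ^ ((N : ℝ) / 2 - 2) * ((mu ^ N)⁻¹ * normRpowMulW N (mu⁻¹ • x)) :=
        integral_mono_of_nonneg (ae_of_all _ fun _ => abs_nonneg _)
          ((((integrable_normRpowMulW hN).comp_smul (inv_ne_zero hmu.ne')).const_mul _).const_mul _)
          ((Measure.ae_ne volume 0).mono fun x hx => abs_LamWb_mul_LamWb_le hN2 hlam hmu hx)
    _ = B * (∫ y, normRpowMulW N y) * (lam / mu) ^ ((N : ℝ) / 2 - 2) := by
        rw [integral_const_mul, h_scaled]; ring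
    _ ≤ _ := by gcongr; exact le_max_left _ _
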